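/- arXiv:2111.02002 — 4 statements merged into one kernel-verified Lean document; each statement's English description precedes it below -/
import Mathlib

section
/- Let N ≥ 1, let ℝ^N = ⊕_{i∈A} V_i be an internal direct sum decomposition into nonzero linear subspaces indexed by a finite set A, and let i₁ ≠ i₂ be two indices in A. Let H be a set of linear endomorphisms of ℝ^N such that h(V_i) ⊆ V_i for every h ∈ H and every i ∈ A. Suppose ψ : V_{i₂} → V_{i₁} is a linear isomorphism which is H-equivariant, i.e. ψ(h x) = h(ψ x) for all h ∈ H and x ∈ V_{i₂}. For s ∈ ℝ define the linear map v_s : ℝ^N → ℝ^N by v_s(x) = x + s·ψ(π_{i₂}(x)), where π_{i₂} is the projection onto V_{i₂} along ⊕_{i≠i₂} V_i. Then: (i) each v_s is invertible with determinant 1; (ii) v_s ∘ v_t = v_{s+t} for all s,t ∈ ℝ and v_s ≠ id for s ≠ 0; (iii) v_s commutes with every h ∈ H; (iv) for every s ≠ 0 the image v_s(V_{i₂}) is not equal to V_{i₂} (so v_s does not leave V_{i₂} invariant). -/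
open Polynomial Matrix

lemma aux_det_one_add_of_isNilpotent {n : Type*} [Fintype n] [DecidableEq n]
    (M : Matrix n n ℝ) (hM : IsNilpotent M) : (1 + M).det = 1 := by
  have hu := Matrix.isUnit_charpolyRev_of_isNilpotent hM
  obtain ⟨c, -, hc⟩ := Polynomial.isUnit_iff.mp hu
  have h0 : Polynomial.eval 0 M.charpolyRev = 1 := Matrix.eval_charpolyRev
  rw [← hc] at h0
  simp at h0
  have hc1 : M.charpolyRev = 1 := by rw [← hc, h0, Polynomial.C_1]
  have := congrArg (Polynomial.eval (-1 : ℝ)) hc1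
  rw [Matrix.charpolyRev, ← Polynomial.coe_evalRingHom, RingHom.map_det] at this
  have hmap : (1 - (X : ℝ[X]) • M.map C).map (Polynomial.evalRingHom (-1 : ℝ)) = 1 + M := by
    ext i j
    rcases eq_or_ne i j with rfl | h
    · simp [Matrix.map_apply, Matrix.one_apply]
    · simp [Matrix.map_apply, Matrix.one_apply, h]
  rw [RingHom.mapMatrix_apply, hmap] at this
  simpa using this

lemma aux_det_one_add_lin {E : Type*} [AddCommGroup E] [Module ℝ E] [FiniteDimensional ℝ E]
    (f : E →ₗ[ℝ] E) (hf : IsNilpotent f) : LinearMap.det (1 + f) = 1 := by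
  let b := Module.finBasis ℝ E
  rw [← LinearMap.det_toMatrix b]
  have h1 : LinearMap.toMatrix b b (1 + f) = 1 + LinearMap.toMatrix b b f := by
    rw [map_add, LinearMap.toMatrix_one]
  rw [h1]
  apply aux_det_one_add_of_isNilpotent
  obtain ⟨k, hk⟩ := hf
  exact ⟨k, by rw [LinearMap.toMatrix_pow b f k, hk, map_zero]⟩


/-- The constructive content of Lemma 2.1: if two summands of an `H`-invariant internal
direct sum decomposition of `ℝ^N` are isomorphic as `H`-representations via `ψ`, then the
one-parameter family `v_s = id + s • (ψ ∘ π_{i₂})` consists of determinant-one invertible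
maps commuting with `H` which do not preserve `V i₂` for `s ≠ 0`. -/
theorem stmt0 {N : ℕ} (hN : 1 ≤ N) {A : Type*} [Fintype A] [DecidableEq A]
    (V : A → Submodule ℝ (EuclideanSpace ℝ (Fin N)))
    (hInternal : DirectSum.IsInternal V)
    (hne : ∀ i, V i ≠ ⊥)
    (i₁ i₂ : A) (hi : i₁ ≠ i₂)
    (H : Set (EuclideanSpace ℝ (Fin N) →ₗ[ℝ] EuclideanSpace ℝ (Fin N)))
    (hH : ∀ h ∈ H, ∀ i, (V i).map h ≤ V i)
    (ψ : (V i₂) ≃ₗ[ℝ] (V i₁))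
    (hψ : ∀ h ∈ H, ∀ x y : V i₂, (y : EuclideanSpace ℝ (Fin N)) = h x →
      (ψ y : EuclideanSpace ℝ (Fin N)) = h (ψ x))
    (π : EuclideanSpace ℝ (Fin N) →ₗ[ℝ] EuclideanSpace ℝ (Fin N))
    (hπmem : ∀ x, π x ∈ V i₂)
    (hπid : ∀ x ∈ V i₂, π x = x)
    (hπ0 : ∀ i, i ≠ i₂ → ∀ x ∈ V i, π x = 0)
    (v : ℝ → (EuclideanSpace ℝ (Fin N) →ₗ[ℝ] EuclideanSpace ℝ (Fin N)))
    (hv : ∀ s x, v s x = x + s • ((ψ ⟨π x, hπmem x⟩ : V i₁) : EuclideanSpace ℝ (Fin N))) :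
    -- (i) each `v s` is invertible with determinant 1
    (∀ s : ℝ, Function.Bijective (v s) ∧ LinearMap.det (v s) = 1) ∧
    -- (ii) one-parameter group, nontrivial for `s ≠ 0`
    (∀ s t : ℝ, (v s).comp (v t) = v (s + t)) ∧
    (∀ s : ℝ, s ≠ 0 → v s ≠ LinearMap.id) ∧
    -- (iii) `v s` commutes with every element of `H`
    (∀ s : ℝ, ∀ h ∈ H, (v s).comp h = h.comp (v s)) ∧
    -- (iv) `v s` does not preserve `V i₂` for `s ≠ 0`
    (∀ s : ℝ, s ≠ 0 → (V i₂).map (v s) ≠ V i₂) := by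
  classical
  set E := EuclideanSpace ℝ (Fin N)
  -- the nilpotent direction
  set f : E →ₗ[ℝ] E :=
    (V i₁).subtype ∘ₗ (ψ : V i₂ →ₗ[ℝ] V i₁) ∘ₗ (π.codRestrict (V i₂) hπmem) with hf_def
  have hf_apply : ∀ x : E, f x = ((ψ ⟨π x, hπmem x⟩ : V i₁) : E) := fun x => rfl
  have hfmem : ∀ x : E, f x ∈ V i₁ := fun x => (ψ ⟨π x, hπmem x⟩ : V i₁).2
  have hπf : ∀ x : E, π (f x) = 0 := fun x => hπ0 i₁ hi _ (hfmem x)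
  have hff : f * f = 0 := by
    refine LinearMap.ext fun x => ?_
    have h1 : (⟨π (f x), hπmem (f x)⟩ : V i₂) = (0 : V i₂) := Subtype.ext (hπf x)
    show f (f x) = (0 : E →ₗ[ℝ] E) x
    rw [hf_apply (f x), h1, map_zero, Submodule.coe_zero, LinearMap.zero_apply]
  have hvs : ∀ s : ℝ, v s = 1 + s • f := by
    intro s
    refine LinearMap.ext fun x => ?_
    rw [hv s x, LinearMap.add_apply, Module.End.one_apply, LinearMap.smul_apply, hf_apply]
  -- group law
  have hgrp : ∀ s t : ℝ, (v s) * (v t) = v (s + t) := by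
    intro s t
    rw [hvs, hvs, hvs]
    have : (1 + s • f) * (1 + t • f)
        = 1 + (s + t) • f + (s * t) • (f * f) := by
      simp only [mul_add, add_mul, one_mul, mul_one, smul_mul_smul_comm]
      module
    rw [this, hff, smul_zero, add_zero]
  have hv0 : v 0 = 1 := by rw [hvs]; simp
  -- nonzero vector of V i₂
  obtain ⟨x₀, hx₀mem, hx₀⟩ := Submodule.exists_mem_ne_zero_of_ne_bot (hne i₂)
  have hπx₀ : π x₀ = x₀ := hπid x₀ hx₀mem
  have hψx₀ : ((ψ ⟨π x₀, hπmem x₀⟩ : V i₁) : E) ≠ 0 := by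
    intro h
    apply hx₀
    have : (⟨π x₀, hπmem x₀⟩ : V i₂) = 0 := by
      apply ψ.injective
      ext; simp [h]
    have := congrArg (Subtype.val) this
    simpa [hπx₀] using this
  refine ⟨?_, fun s t => hgrp s t, ?_, ?_, ?_⟩
  · intro s
    constructor
    · -- bijective via inverse v (-s)
      have h1 : (v s) * (v (-s)) = 1 := by rw [hgrp]; simpa using hv0
      have h2 : (v (-s)) * (v s) = 1 := by rw [hgrp]; simpa using hv0
      exact Function.bijective_iff_has_inverse.mpr
        ⟨v (-s), fun x => by
            have := congrArg (fun g : E →ₗ[ℝ] E => g x) h2; simpa using this,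
          fun x => by
            have := congrArg (fun g : E →ₗ[ℝ] E => g x) h1; simpa using this⟩
    · rw [hvs]
      exact aux_det_one_add_lin (s • f)
        ⟨2, by rw [_root_.smul_pow, pow_two f, hff, smul_zero]⟩
  · -- v s ≠ id for s ≠ 0
    intro s hs h
    have := congrArg (fun g : E →ₗ[ℝ] E => g x₀) h
    simp only [hv s x₀, LinearMap.id_coe, id_eq] at this
    have h0 : s • ((ψ ⟨π x₀, hπmem x₀⟩ : V i₁) : E) = 0 := by
      have := congrArg (fun y => y - x₀) this
      simpa using this
    exact hψx₀ (by simpa [hs] using (smul_eq_zero.mp h0).resolve_left hs)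
  · -- commuting with H
    intro s h hh
    have hπh : ∀ x : E, π (h x) = h (π x) := by
      intro x
      have hx : x ∈ ⨆ i, V i := by
        rw [hInternal.submodule_iSup_eq_top]; trivial
      refine Submodule.iSup_induction (motive := fun y => π (h y) = h (π y)) V hx ?_ ?_ ?_
      · intro i y hy
        have hhy : h y ∈ V i := hH h hh i ⟨y, hy, rfl⟩
        rcases eq_or_ne i i₂ with rfl | hii
        · rw [hπid _ hhy, hπid _ hy]
        · rw [hπ0 i hii _ hhy, hπ0 i hii _ hy, map_zero]
      · simp
      · intro y z hy hz
        simp [map_add, hy, hz]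
    refine LinearMap.ext fun x => ?_
    simp only [LinearMap.comp_apply, hv]
    have key : ((ψ ⟨π (h x), hπmem _⟩ : V i₁) : E) = h ((ψ ⟨π x, hπmem x⟩ : V i₁) : E) := by
      exact hψ h hh ⟨π x, hπmem x⟩ ⟨π (h x), hπmem _⟩ (by simp [hπh x])
    rw [key, map_add, h.map_smul]
  · -- does not preserve V i₂
    intro s hs hmap
    have hxin : v s x₀ ∈ (V i₂).map (v s) := ⟨x₀, hx₀mem, rfl⟩
    rw [hmap] at hxin
    rw [hv s x₀] at hxin
    have hsub : s • ((ψ ⟨π x₀, hπmem x₀⟩ : V i₁) : E) ∈ V i₂ := by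
      have := Submodule.sub_mem (V i₂) hxin hx₀mem
      simpa using this
    have hsub' : s • ((ψ ⟨π x₀, hπmem x₀⟩ : V i₁) : E) ∈ V i₁ :=
      Submodule.smul_mem _ s (ψ ⟨π x₀, hπmem x₀⟩ : V i₁).2
    have hdisj : Disjoint (V i₁) (V i₂) :=
      (hInternal.submodule_iSupIndep.pairwiseDisjoint) hi
    have h0 : s • ((ψ ⟨π x₀, hπmem x₀⟩ : V i₁) : E) = 0 :=
      Submodule.disjoint_def.mp hdisj _ hsub' hsub
    exact hψx₀ ((smul_eq_zero.mp h0).resolve_left hs)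
end

section
/- Let N ≥ 1 and equip ℝ^N with the standard Euclidean inner product and norm. Let A be a finite index set and ℝ^N = ⊕_{i∈A} V_i an internal direct sum decomposition into nonzero linear subspaces. Let M be a subgroup of SL_N(ℝ) such that every m ∈ M maps each V_i into itself and such that each V_i is M-irreducible, i.e. the only subspaces of V_i mapped into themselves by every element of M are 0 and V_i. Define S := {s ∈ SL_N(ℝ) : for every i ∈ A there exists λ_i > 0 such that s x = λ_i x for all x ∈ V_i}. Then for every proper subspace W ⊊ ℝ^N with m(W) ⊆ W for every m ∈ M, there exists s ∈ S such that ‖s w‖ > ‖w‖ for every nonzero w ∈ W. -/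
open Matrix

lemma my_det_prodMap {M₁ M₂ : Type*} [AddCommGroup M₁] [Module ℝ M₁] [FiniteDimensional ℝ M₁]
    [AddCommGroup M₂] [Module ℝ M₂] [FiniteDimensional ℝ M₂]
    (f : M₁ →ₗ[ℝ] M₁) (g : M₂ →ₗ[ℝ] M₂) :
    LinearMap.det (f.prodMap g) = LinearMap.det f * LinearMap.det g := by
  classical
  let b₁ := Module.finBasis ℝ M₁
  let b₂ := Module.finBasis ℝ M₂
  rw [← LinearMap.det_toMatrix b₁ f, ← LinearMap.det_toMatrix b₂ g,
    ← LinearMap.det_toMatrix (b₁.prod b₂), LinearMap.toMatrix_prodMap b₁ b₂ f g,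
    Matrix.det_fromBlocks_zero₁₂]

set_option maxHeartbeats 1000000 in
/-- Key expansion claim inside the proof of Lemma 2.3: on every proper `M`-invariant subspace,
some element of the group `S` of positive-scalar-on-each-summand matrices strictly expands all
norms. -/
theorem stmt2 {N : ℕ} (hN : 1 ≤ N) {A : Type*} [Fintype A] [DecidableEq A]
    (V : A → Submodule ℝ (EuclideanSpace ℝ (Fin N)))
    (hInternal : DirectSum.IsInternal V)
    (hne : ∀ i, V i ≠ ⊥)
    (M : Subgroup (Matrix.SpecialLinearGroup (Fin N) ℝ))
    (hMinv : ∀ m ∈ M, ∀ i, (V i).map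
      (Matrix.toEuclideanLin (m : Matrix (Fin N) (Fin N) ℝ)) ≤ V i)
    (hirr : ∀ i, ∀ U : Submodule ℝ (EuclideanSpace ℝ (Fin N)), U ≤ V i →
      (∀ m ∈ M, U.map (Matrix.toEuclideanLin (m : Matrix (Fin N) (Fin N) ℝ)) ≤ U) →
      U = ⊥ ∨ U = V i) :
    ∀ W : Submodule ℝ (EuclideanSpace ℝ (Fin N)), W ≠ ⊤ →
      (∀ m ∈ M, W.map (Matrix.toEuclideanLin (m : Matrix (Fin N) (Fin N) ℝ)) ≤ W) →
      ∃ s : Matrix.SpecialLinearGroup (Fin N) ℝ,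
        (∀ i, ∃ l : ℝ, 0 < l ∧ ∀ x ∈ V i,
          Matrix.toEuclideanLin (s : Matrix (Fin N) (Fin N) ℝ) x = l • x) ∧
        (∀ w ∈ W, w ≠ 0 →
          ‖Matrix.toEuclideanLin (s : Matrix (Fin N) (Fin N) ℝ) w‖ > ‖w‖) := by
  classical
  intro W hWtop hWinv
  -- find i₀ with W ⊓ V i₀ = ⊥
  have hD : ∃ i₀, W ⊓ V i₀ = ⊥ := by
    by_contra h
    push_neg at h
    have hle : ∀ i, V i ≤ W := by
      intro i
      rcases hirr i (W ⊓ V i) inf_le_right (fun m hm => by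
        refine le_trans (Submodule.map_inf_le _) ?_
        exact inf_le_inf (hWinv m hm) (hMinv m hm i)) with h0 | h1
      · exact absurd h0 (h i)
      · rw [← h1]; exact inf_le_left
    exact hWtop (top_unique (hInternal.submodule_iSup_eq_top ▸ iSup_le hle))
  obtain ⟨i₀, hWV⟩ := hD
  set p : Submodule ℝ (EuclideanSpace ℝ (Fin N)) := V i₀ with hp
  set q : Submodule ℝ (EuclideanSpace ℝ (Fin N)) := ⨆ (j) (_ : j ≠ i₀), V j with hq
  have hVq : ∀ i, i ≠ i₀ → V i ≤ q := fun i hi =>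
    (le_iSup (fun _ : i ≠ i₀ => V i) hi).trans (le_iSup (fun j => ⨆ _ : j ≠ i₀, V j) i)
  have hcompl : IsCompl p q := by
    constructor
    · exact (iSupIndep_def.mp hInternal.submodule_iSupIndep) i₀
    · rw [codisjoint_iff_le_sup, ← hInternal.submodule_iSup_eq_top]
      refine iSup_le fun i => ?_
      by_cases hi : i = i₀
      · subst hi; exact le_sup_left
      · exact le_sup_of_le_right (hVq i hi)
  set π := p.linearProjOfIsCompl q hcompl with hπ
  set π' := q.linearProjOfIsCompl p hcompl.symm with hπ'
  -- antilipschitz constant for projection to q restricted to W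
  have hker : LinearMap.ker (π'.comp W.subtype) = ⊥ := by
    rw [LinearMap.ker_eq_bot']
    intro x hx
    have hxp : (x : EuclideanSpace ℝ (Fin N)) ∈ p :=
      (Submodule.linearProjOfIsCompl_apply_eq_zero_iff hcompl.symm).mp hx
    have hx2 : (x : EuclideanSpace ℝ (Fin N)) ∈ W ⊓ p := ⟨x.2, hxp⟩
    rw [hWV] at hx2
    exact Subtype.ext hx2
  obtain ⟨K, hK0, hKa⟩ := (π'.comp W.subtype).exists_antilipschitzWith hker
  set B : ℝ := max (K : ℝ) 1 with hB
  have hB1 : (1 : ℝ) ≤ B := le_max_right _ _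
  set μ : ℝ := 3 * B + 2 with hμ
  have hμ1 : (1 : ℝ) < μ := by nlinarith
  have hμ0 : (0 : ℝ) < μ := by linarith
  set d : ℕ := Module.finrank ℝ p with hd
  set e : ℕ := Module.finrank ℝ q with he
  have hd0 : 0 < d := by
    have : Nontrivial p := Submodule.nontrivial_iff_ne_bot.mpr (hne i₀)
    exact Module.finrank_pos
  set lam : ℝ := μ ^ (-(e : ℝ) / (d : ℝ)) with hlam
  have hlam0 : 0 < lam := Real.rpow_pos_of_pos hμ0 _
  have hlam1 : lam ≤ 1 := by
    apply Real.rpow_le_one_of_one_le_of_nonpos hμ1.le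
    exact div_nonpos_of_nonpos_of_nonneg (neg_nonpos.mpr (Nat.cast_nonneg e))
      (Nat.cast_nonneg d)
  -- the linear map
  set e₀ := Submodule.prodEquivOfIsCompl p q hcompl with he₀
  set f : EuclideanSpace ℝ (Fin N) →ₗ[ℝ] EuclideanSpace ℝ (Fin N) :=
    (e₀ : p × q →ₗ[ℝ] EuclideanSpace ℝ (Fin N)) ∘ₗ
      ((lam • (LinearMap.id : p →ₗ[ℝ] p)).prodMap (μ • (LinearMap.id : q →ₗ[ℝ] q))) ∘ₗ
      (e₀.symm : EuclideanSpace ℝ (Fin N) →ₗ[ℝ] p × q) with hf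
  have hd0' : (d : ℝ) ≠ 0 := Nat.cast_ne_zero.mpr hd0.ne'
  have hdetf : LinearMap.det f = 1 := by
    have h2 : LinearMap.det f = lam ^ d * μ ^ e := by
      rw [hf, LinearMap.det_conj, my_det_prodMap, LinearMap.det_smul, LinearMap.det_smul]
      simp [← hd, ← he]
    rw [h2, hlam, ← Real.rpow_natCast (μ ^ (-(e : ℝ) / (d : ℝ))) d, ← Real.rpow_mul hμ0.le,
      ← Real.rpow_natCast μ e, ← Real.rpow_add hμ0]
    rw [show -(e : ℝ) / (d : ℝ) * ((d : ℕ) : ℝ) + ((e : ℕ) : ℝ) = 0 by field_simp; ring]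
    exact Real.rpow_zero μ
  -- action on p and q
  have hfp : ∀ x ∈ p, f x = lam • x := by
    intro x hx
    have h1 : e₀.symm x = (⟨x, hx⟩, 0) := Submodule.prodEquivOfIsCompl_symm_apply_left p q hcompl ⟨x, hx⟩
    simp only [hf, LinearMap.comp_apply, LinearEquiv.coe_coe, h1, LinearMap.prodMap_apply,
      Prod.map_apply, LinearMap.smul_apply, LinearMap.id_apply, smul_zero,
      Submodule.coe_prodEquivOfIsCompl']
    rw [he₀]
    simp [Submodule.coe_prodEquivOfIsCompl']
  have hfq : ∀ x ∈ q, f x = μ • x := by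
    intro x hx
    have h1 : e₀.symm x = (0, ⟨x, hx⟩) :=
      Submodule.prodEquivOfIsCompl_symm_apply_right p q hcompl ⟨x, hx⟩
    simp only [hf, LinearMap.comp_apply, LinearEquiv.coe_coe, h1, LinearMap.prodMap_apply,
      Prod.map_apply, LinearMap.smul_apply, LinearMap.id_apply, smul_zero,
      Submodule.coe_prodEquivOfIsCompl']
    rw [he₀]
    simp [Submodule.coe_prodEquivOfIsCompl']
  -- the matrix
  set b : Module.Basis (Fin N) ℝ (EuclideanSpace ℝ (Fin N)) := PiLp.basisFun 2 ℝ (Fin N) with hb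
  set smat : Matrix (Fin N) (Fin N) ℝ := Matrix.toEuclideanLin.symm f with hsmat
  have hsdet : smat.det = 1 := by
    have h1 : smat = LinearMap.toMatrix b b f := by
      rw [hsmat, Matrix.toEuclideanLin_eq_toLin, hb, Matrix.toLin_symm]
    rw [h1, LinearMap.det_toMatrix, hdetf]
  have hback : Matrix.toEuclideanLin smat = f := Matrix.toEuclideanLin.apply_symm_apply f
  refine ⟨⟨smat, hsdet⟩, ?_, ?_⟩
  · intro i
    by_cases hi : i = i₀
    · subst hi
      exact ⟨lam, hlam0, fun x hx => by rw [hback]; exact hfp x hx⟩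
    · exact ⟨μ, hμ0, fun x hx => by rw [hback]; exact hfq x (hVq i hi hx)⟩
  · intro w hw hw0
    rw [hback]
    have hsum : (π w : EuclideanSpace ℝ (Fin N)) + (π' w : EuclideanSpace ℝ (Fin N)) = w :=
      Submodule.projection_add_projection_eq_self hcompl w
    have key : ∀ a b : EuclideanSpace ℝ (Fin N), a + b = w → a ∈ p → b ∈ q →
        f w = lam • w + (μ - lam) • b := by
      intro a b hab hap hbq
      rw [← hab, map_add, hfp a hap, hfq b hbq, smul_add, sub_smul]
      abel
    have hfw : f w = lam • w + (μ - lam) • (π' w : EuclideanSpace ℝ (Fin N)) :=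
      key _ _ hsum (π w).2 (π' w).2
    -- lower bound on the q-component
    have hwle : ‖w‖ ≤ B * ‖(π' w : EuclideanSpace ℝ (Fin N))‖ := by
      have h1 : dist (⟨w, hw⟩ : W) (0 : W) ≤
          K * dist ((π'.comp W.subtype) ⟨w, hw⟩) ((π'.comp W.subtype) 0) := hKa.le_mul_dist _ _
      simp only [map_zero, dist_zero_right] at h1
      have h2 : ‖(⟨w, hw⟩ : W)‖ = ‖w‖ := rfl
      have h3 : ‖(π'.comp W.subtype) (⟨w, hw⟩ : W)‖ = ‖(π' w : EuclideanSpace ℝ (Fin N))‖ := rfl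
      rw [h2, h3] at h1
      have h4 : (K : ℝ) ≤ B := le_max_left _ _
      nlinarith [norm_nonneg (π' w : EuclideanSpace ℝ (Fin N))]
    have htri : (μ - lam) * ‖(π' w : EuclideanSpace ℝ (Fin N))‖ - lam * ‖w‖ ≤ ‖f w‖ := by
      have h1 : ‖(μ - lam) • (π' w : EuclideanSpace ℝ (Fin N))‖
          ≤ ‖f w‖ + ‖lam • w‖ := by
        have := norm_sub_le (f w) (lam • w)
        have h2 : f w - lam • w = (μ - lam) • (π' w : EuclideanSpace ℝ (Fin N)) := by
          rw [hfw]; abel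
        rw [h2] at this; linarith
      rw [norm_smul, norm_smul, Real.norm_eq_abs, Real.norm_eq_abs,
        abs_of_nonneg (by linarith : (0:ℝ) ≤ μ - lam), abs_of_nonneg hlam0.le] at h1
      linarith
    have hwpos : 0 < ‖w‖ := norm_pos_iff.mpr hw0
    have hμlam : 3 * B + 1 ≤ μ - lam := by rw [hμ]; linarith
    have hpos : 0 ≤ ‖(π' w : EuclideanSpace ℝ (Fin N))‖ := norm_nonneg _
    have e1 : (3 * B + 1) * ‖(π' w : EuclideanSpace ℝ (Fin N))‖
        ≤ (μ - lam) * ‖(π' w : EuclideanSpace ℝ (Fin N))‖ :=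
      mul_le_mul_of_nonneg_right hμlam hpos
    have e3 : lam * ‖w‖ ≤ 1 * ‖w‖ := mul_le_mul_of_nonneg_right hlam1 (norm_nonneg w)
    have e2 : (3 * B + 1) * ‖(π' w : EuclideanSpace ℝ (Fin N))‖
        = 3 * (B * ‖(π' w : EuclideanSpace ℝ (Fin N))‖)
          + ‖(π' w : EuclideanSpace ℝ (Fin N))‖ := by ring
    linarith [htri, e1, e2, e3, hwle, hpos, hwpos]
end

section
/- Let N ≥ 1, let c > 1, let Λ ⊆ ℝ^N be a lattice of full rank N with covolume ‖Λ‖ = 1, and let M be a set of linear endomorphisms of ℝ^N. Suppose there exists a nonzero (M,Λ)-eligible subspace W₁ ⊆ ℝ^N with ‖Λ ∩ W₁‖ < c^{-N}. Then there exists a proper nonzero (M,Λ)-eligible subspace W_∞ ⊊ ℝ^N such that for every (M,Λ)-eligible subspace W not contained in W_∞, the discrete subgroup (Λ ∩ W) + (Λ ∩ W_∞) of ℝ^N satisfies ‖(Λ ∩ W) + (Λ ∩ W_∞)‖ ≥ c·‖Λ ∩ W_∞‖. -/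
/-- The covolume of a discrete subgroup `Δ` of `ℝ^N` in its real span (by convention
`covol {0} = 1`). -/
noncomputable def covol {N : ℕ} (Δ : AddSubgroup (EuclideanSpace ℝ (Fin N))) : ℝ :=
  sInf { x : ℝ | ∃ (r : ℕ) (v : Fin r → EuclideanSpace ℝ (Fin N)),
    LinearIndependent ℝ v ∧
    (Submodule.span ℤ (Set.range v)).toAddSubgroup = Δ ∧
    x = Real.sqrt (Matrix.det (Matrix.of fun i j : Fin r => (inner ℝ (v i) (v j) : ℝ))) }

/-- `W` is `Λ`-rational: `W` is spanned over `ℝ` by `W ∩ Λ`. -/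
def IsRational {N : ℕ} (Λ : AddSubgroup (EuclideanSpace ℝ (Fin N)))
    (W : Submodule ℝ (EuclideanSpace ℝ (Fin N))) : Prop :=
  W = Submodule.span ℝ ((W : Set (EuclideanSpace ℝ (Fin N))) ∩ (Λ : Set (EuclideanSpace ℝ (Fin N))))

/-- `W` is `(M,Λ)`-eligible: `W` is `Λ`-rational and invariant under every element of `M`. -/
def IsEligible {N : ℕ} (M : Set (EuclideanSpace ℝ (Fin N) →ₗ[ℝ] EuclideanSpace ℝ (Fin N)))
    (Λ : AddSubgroup (EuclideanSpace ℝ (Fin N)))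
    (W : Submodule ℝ (EuclideanSpace ℝ (Fin N))) : Prop :=
  IsRational Λ W ∧ ∀ m ∈ M, W.map m ≤ W

/-!
Put `F W = covol (Λ ⊓ W) / c ^ dim W`. By the ascending chain condition on subspaces there is an
eligible `W∞ ⊇ W₁` with `F W∞ ≤ F W₁` and `F W∞ ≤ F W'` for every eligible `W' ⊋ W∞`; it is not
`⊤`, because `F ⊤ = c⁻ᴺ > covol (Λ ⊓ W₁) ≥ F W₁`. For eligible `W ⊄ W∞` the eligible subspace
`W' = W ⊔ W∞` is strictly larger, so `covol (Λ ⊓ W') ≥ c ^ (dim W' - dim W∞) * covol (Λ ⊓ W∞)`.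
Finally `(Λ ⊓ W) ⊔ (Λ ⊓ W∞)` is a sublattice of `Λ ⊓ W'` of full rank, and passing to such a
sublattice multiplies the Gram determinant by the square of a nonzero integer.
-/

open Submodule Set Matrix

section LinearIndependence

variable {E : Type*} [NormedAddCommGroup E] [InnerProductSpace ℝ E]

theorem gram_sum_smul {ι κ : Type*} [Fintype ι] (v : ι → E) (B : Matrix κ ι ℝ) :
    gram ℝ (fun j ↦ ∑ i, B j i • v i) = B * gram ℝ v * Bᵀ := by
  ext j k
  simp only [gram_apply, mul_apply, transpose_apply, sum_inner, inner_sum, real_inner_smul_left,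
    real_inner_smul_right, Finset.sum_mul]
  refine Finset.sum_congr rfl fun i _ ↦ Finset.sum_congr rfl fun i' _ ↦ ?_
  rw [real_inner_comm]
  ring

theorem det_gram_le_of_span_int_le {ι : Type*} [Fintype ι] [DecidableEq ι] {v w : ι → E}
    (hw : LinearIndependent ℝ w) (h : span ℤ (range w) ≤ span ℤ (range v)) :
    (gram ℝ v).det ≤ (gram ℝ w).det := by
  obtain ⟨B, hB⟩ : ∃ B : Matrix ι ι ℤ, ∀ j, ∑ i, B j i • v i = w j := by
    choose B hB using fun j ↦
      (mem_span_range_iff_exists_fun ℤ).mp (h (subset_span (mem_range_self j)))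
    exact ⟨of B, hB⟩
  have hwB : w = fun j ↦ ∑ i, (B.map (Int.cast : ℤ → ℝ)) j i • v i := by
    ext1 j
    simp only [map_apply, Int.cast_smul_eq_zsmul, hB]
  have hdet : (gram ℝ w).det = (B.det : ℝ) ^ 2 * (gram ℝ v).det := by
    rw [hwB, gram_sum_smul, det_mul, det_mul, det_transpose, ← Int.cast_det]
    ring
  have hB0 : B.det ≠ 0 := fun h0 ↦
    det_gram_ne_zero_iff_linearIndependent.mpr hw (by simp [hdet, h0])
  have hB1 : (1 : ℝ) ≤ (B.det : ℝ) ^ 2 := by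
    have := Int.one_le_abs hB0
    rw [← sq_abs]
    exact_mod_cast one_le_pow₀ this
  nlinarith [(posSemidef_gram ℝ v).det_nonneg]

theorem card_eq_of_span_eq {r s : ℕ} {v : Fin r → E} {w : Fin s → E}
    (hv : LinearIndependent ℝ v) (hw : LinearIndependent ℝ w)
    (h : span ℝ (range v) = span ℝ (range w)) : r = s := by
  have := finrank_span_eq_card hv
  rw [h, finrank_span_eq_card hw] at this
  simpa using this.symm

theorem exists_linearIndependent_span_eq_of_le {n : ℕ} {b : Fin n → E}
    (hb : LinearIndependent ℝ b) {Δ : AddSubgroup E}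
    (hΔ : Δ ≤ (span ℤ (range b)).toAddSubgroup) :
    ∃ (r : ℕ) (v : Fin r → E), LinearIndependent ℝ v ∧ (span ℤ (range v)).toAddSubgroup = Δ := by
  obtain ⟨r, bas⟩ := basisOfPidOfLESpan (hb.restrict_scalars' ℤ) (N := Δ.toIntSubmodule) hΔ
  set v : Fin r → E := fun i ↦ bas i
  have hvZ : LinearIndependent ℤ v := bas.linearIndependent.map' _ (ker_subtype _)
  have hspan : span ℤ (range v) = Δ.toIntSubmodule := by
    rw [show range v = Δ.toIntSubmodule.subtype '' range bas from range_comp _ _,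
      span_image, bas.span_eq, map_subtype_top]
  refine ⟨r, v, ?_, by rw [hspan]; rfl⟩
  -- the integer coordinate vectors of `v` in `b` are independent over `ℤ`, hence over `ℝ`
  choose A hAv using fun j ↦ (mem_span_range_iff_exists_fun ℤ).mp (hΔ (bas j).2)
  have hA : LinearIndependent ℤ A :=
    LinearIndependent.of_comp (Fintype.linearCombination ℤ b) (by convert hvZ; ext1 j; exact hAv j)
  have hAR : LinearIndependent ℝ fun j ↦ ((Int.cast : ℤ → ℝ) ∘ A j) :=
    linearIndependent_algebraMap_comp_iff.mpr hA
  have hbinj := linearIndependent_iff_injective_fintypeLinearCombination.mp hb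
  convert hAR.map_injOn _ hbinj.injOn using 1
  ext1 j
  simp [Fintype.linearCombination_apply, ← hAv j, v, Int.cast_smul_eq_zsmul]

end LinearIndependence

section Covolume

variable {N : ℕ}

theorem covol_nonneg (Δ : AddSubgroup (EuclideanSpace ℝ (Fin N))) : 0 ≤ covol Δ :=
  Real.sInf_nonneg <| by
    rintro _ ⟨r, v, -, -, rfl⟩
    exact Real.sqrt_nonneg _

theorem covol_eq_sqrt_det_gram {r : ℕ} {v : Fin r → EuclideanSpace ℝ (Fin N)}
    (hv : LinearIndependent ℝ v) {Δ : AddSubgroup (EuclideanSpace ℝ (Fin N))}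
    (hvΔ : (span ℤ (range v)).toAddSubgroup = Δ) :
    covol Δ = √(gram ℝ v).det := by
  refine le_antisymm (csInf_le ⟨0, ?_⟩ ⟨r, v, hv, hvΔ, rfl⟩) (le_csInf ⟨_, r, v, hv, hvΔ, rfl⟩ ?_)
  · rintro _ ⟨s, w, -, -, rfl⟩
    exact Real.sqrt_nonneg _
  · rintro _ ⟨s, w, hw, hwΔ, rfl⟩
    have hspan : span ℤ (range w) = span ℤ (range v) :=
      toAddSubgroup_injective (hwΔ.trans hvΔ.symm)
    obtain rfl : s = r := card_eq_of_span_eq hw hv <| by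
      rw [← span_span_of_tower ℤ, hspan, span_span_of_tower]
    exact Real.sqrt_le_sqrt (det_gram_le_of_span_int_le hw hspan.le)

theorem covol_le_of_le_of_span_eq {n : ℕ} {b : Fin n → EuclideanSpace ℝ (Fin N)}
    (hb : LinearIndependent ℝ b) {Δ' Δ : AddSubgroup (EuclideanSpace ℝ (Fin N))}
    (hΔ'Δ : Δ' ≤ Δ) (hΔ : Δ ≤ (span ℤ (range b)).toAddSubgroup)
    (hspan : span ℝ (Δ' : Set (EuclideanSpace ℝ (Fin N))) = span ℝ (Δ : Set _)) :
    covol Δ ≤ covol Δ' := by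
  obtain ⟨r, v, hv, rfl⟩ := exists_linearIndependent_span_eq_of_le hb hΔ
  obtain ⟨s, w, hw, rfl⟩ := exists_linearIndependent_span_eq_of_le hb (hΔ'Δ.trans hΔ)
  obtain rfl : s = r := card_eq_of_span_eq hw hv <| by
    simpa only [coe_toAddSubgroup, span_span_of_tower] using hspan
  rw [covol_eq_sqrt_det_gram hv rfl, covol_eq_sqrt_det_gram hw rfl]
  exact Real.sqrt_le_sqrt (det_gram_le_of_span_int_le hw hΔ'Δ)

end Covolume

section Eligible

variable {N : ℕ} {Λ : AddSubgroup (EuclideanSpace ℝ (Fin N))}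
  {W V : Submodule ℝ (EuclideanSpace ℝ (Fin N))}

theorem IsRational.span_inf (hW : IsRational Λ W) :
    span ℝ ((Λ ⊓ W.toAddSubgroup : AddSubgroup _) : Set (EuclideanSpace ℝ (Fin N))) = W := by
  rw [AddSubgroup.coe_inf, coe_toAddSubgroup, inter_comm]
  exact hW.symm

theorem IsRational.sup (hW : IsRational Λ W) (hV : IsRational Λ V) : IsRational Λ (W ⊔ V) :=
  le_antisymm
    (sup_le (hW.le.trans (span_mono (inter_subset_inter_left _ (SetLike.coe_mono le_sup_left))))
      (hV.le.trans (span_mono (inter_subset_inter_left _ (SetLike.coe_mono le_sup_right)))))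
    (span_le.mpr inter_subset_left)

theorem IsEligible.sup {M : Set (EuclideanSpace ℝ (Fin N) →ₗ[ℝ] EuclideanSpace ℝ (Fin N))}
    (hW : IsEligible M Λ W) (hV : IsEligible M Λ V) : IsEligible M Λ (W ⊔ V) :=
  ⟨hW.1.sup hV.1, fun m hm ↦ by
    rw [Submodule.map_sup]
    exact sup_le_sup (hW.2 m hm) (hV.2 m hm)⟩

theorem IsRational.span_sup_inf (hW : IsRational Λ W) (hV : IsRational Λ V) :
    span ℝ (((Λ ⊓ W.toAddSubgroup) ⊔ (Λ ⊓ V.toAddSubgroup) : AddSubgroup _) :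
      Set (EuclideanSpace ℝ (Fin N))) = W ⊔ V := by
  refine le_antisymm (span_le.mpr fun x hx ↦ ?_) (sup_le ?_ ?_)
  · exact (sup_le (inf_le_right.trans (toAddSubgroup_mono le_sup_left))
      (inf_le_right.trans (toAddSubgroup_mono le_sup_right)) hx : x ∈ (W ⊔ V).toAddSubgroup)
  · exact hW.span_inf.ge.trans (span_mono (SetLike.coe_mono le_sup_left))
  · exact hV.span_inf.ge.trans (span_mono (SetLike.coe_mono le_sup_right))

end Eligible

theorem exists_le_forall_lt_imp_le {α β : Type*} [PartialOrder α] [WellFoundedGT α] [LinearOrder β]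
    (P : α → Prop) (F : α → β) {a : α} (ha : P a) :
    ∃ b, a ≤ b ∧ P b ∧ F b ≤ F a ∧ ∀ c, P c → b < c → F b ≤ F c := by
  obtain ⟨b, ⟨hab, hb, hFb⟩, hmax⟩ :=
    exists_maximal_of_wellFoundedGT (fun b ↦ a ≤ b ∧ P b ∧ F b ≤ F a) ⟨a, le_rfl, ha, le_rfl⟩
  refine ⟨b, hab, hb, hFb, fun c hc hbc ↦ le_of_not_gt fun hcb ↦ hbc.not_ge ?_⟩
  exact hmax ⟨hab.trans hbc.le, hc, hcb.le.trans hFb⟩ hbc.le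

theorem mul_le_of_div_pow_le_div_pow {a b c : ℝ} {m n : ℕ} (hc : 1 ≤ c) (ha : 0 ≤ a) (hmn : m < n)
    (h : a / c ^ m ≤ b / c ^ n) : c * a ≤ b := by
  have hc0 : 0 < c := zero_lt_one.trans_le hc
  rw [div_le_div_iff₀ (by positivity) (by positivity)] at h
  refine le_of_mul_le_mul_right ?_ (pow_pos hc0 m)
  calc c * a * c ^ m = a * c ^ (m + 1) := by ring
    _ ≤ a * c ^ n := mul_le_mul_of_nonneg_left (pow_le_pow_right₀ hc hmn) ha
    _ ≤ b * c ^ m := h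

theorem stmt4_general {N : ℕ} (c : ℝ) (hc : 1 < c)
    (Λ : AddSubgroup (EuclideanSpace ℝ (Fin N)))
    (hfull : ∃ v : Fin N → EuclideanSpace ℝ (Fin N),
      LinearIndependent ℝ v ∧ (Submodule.span ℤ (Set.range v)).toAddSubgroup = Λ)
    (hcovol : covol Λ = 1)
    (M : Set (EuclideanSpace ℝ (Fin N) →ₗ[ℝ] EuclideanSpace ℝ (Fin N)))
    (W₁ : Submodule ℝ (EuclideanSpace ℝ (Fin N)))
    (hW₁ : W₁ ≠ ⊥) (hW₁e : IsEligible M Λ W₁)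
    (hW₁small : covol (Λ ⊓ W₁.toAddSubgroup) < (c ^ N)⁻¹) :
    ∃ Winf : Submodule ℝ (EuclideanSpace ℝ (Fin N)),
      Winf ≠ ⊥ ∧ Winf ≠ ⊤ ∧ IsEligible M Λ Winf ∧
      ∀ W : Submodule ℝ (EuclideanSpace ℝ (Fin N)), IsEligible M Λ W → ¬ W ≤ Winf →
        covol ((Λ ⊓ W.toAddSubgroup) ⊔ (Λ ⊓ Winf.toAddSubgroup)) ≥
          c * covol (Λ ⊓ Winf.toAddSubgroup) := by
  obtain ⟨b, hb, hbΛ⟩ := hfull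
  obtain ⟨V, hW₁V, hVe, hFV, hVmin⟩ := exists_le_forall_lt_imp_le (IsEligible M Λ)
    (fun W ↦ covol (Λ ⊓ W.toAddSubgroup) / c ^ Module.finrank ℝ W) hW₁e
  refine ⟨V, ne_bot_of_le_ne_bot hW₁ hW₁V, ?_, hVe, fun W hWe hWV ↦ ?_⟩
  · rintro rfl
    have hFW₁ : covol (Λ ⊓ W₁.toAddSubgroup) / c ^ Module.finrank ℝ W₁ < (c ^ N)⁻¹ :=
      (div_le_self (covol_nonneg _) (one_le_pow₀ hc.le)).trans_lt hW₁small
    simp only [top_toAddSubgroup, inf_top_eq, hcovol, finrank_top, finrank_euclideanSpace_fin,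
      one_div] at hFV
    exact (hFV.trans_lt hFW₁).false
  have hlt : V < W ⊔ V := right_lt_sup.mpr hWV
  calc c * covol (Λ ⊓ V.toAddSubgroup) ≤ covol (Λ ⊓ (W ⊔ V).toAddSubgroup) :=
        mul_le_of_div_pow_le_div_pow hc.le (covol_nonneg _) (finrank_lt_finrank_of_lt hlt)
          (hVmin _ (hWe.sup hVe) hlt)
    _ ≤ covol ((Λ ⊓ W.toAddSubgroup) ⊔ (Λ ⊓ V.toAddSubgroup)) := by
        refine covol_le_of_le_of_span_eq hb
          (sup_le (inf_le_inf_left Λ (toAddSubgroup_mono le_sup_left))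
            (inf_le_inf_left Λ (toAddSubgroup_mono le_sup_right)))
          (hbΛ ▸ inf_le_left) ?_
        rw [hWe.1.span_sup_inf hVe.1, (hWe.1.sup hVe.1).span_inf]

/-- Lemma 2.4 of the paper: if some nonzero `(M,Λ)`-eligible subspace has small covolume, then
there is a proper nonzero `(M,Λ)`-eligible subspace `W∞` which is "protected": for every
eligible `W` not contained in `W∞`, the covolume of `(Λ ∩ W) + (Λ ∩ W∞)` is at least
`c` times that of `Λ ∩ W∞`. -/
theorem stmt4 {N : ℕ} (hN : 1 ≤ N) (c : ℝ) (hc : 1 < c)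
    (Λ : AddSubgroup (EuclideanSpace ℝ (Fin N)))
    (hfull : ∃ v : Fin N → EuclideanSpace ℝ (Fin N),
      LinearIndependent ℝ v ∧ (Submodule.span ℤ (Set.range v)).toAddSubgroup = Λ)
    (hcovol : covol Λ = 1)
    (M : Set (EuclideanSpace ℝ (Fin N) →ₗ[ℝ] EuclideanSpace ℝ (Fin N)))
    (W₁ : Submodule ℝ (EuclideanSpace ℝ (Fin N)))
    (hW₁ : W₁ ≠ ⊥) (hW₁e : IsEligible M Λ W₁)
    (hW₁small : covol (Λ ⊓ W₁.toAddSubgroup) < (c ^ N)⁻¹) :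
    ∃ Winf : Submodule ℝ (EuclideanSpace ℝ (Fin N)),
      Winf ≠ ⊥ ∧ Winf ≠ ⊤ ∧ IsEligible M Λ Winf ∧
      ∀ W : Submodule ℝ (EuclideanSpace ℝ (Fin N)), IsEligible M Λ W → ¬ W ≤ Winf →
        covol ((Λ ⊓ W.toAddSubgroup) ⊔ (Λ ⊓ Winf.toAddSubgroup)) ≥
          c * covol (Λ ⊓ Winf.toAddSubgroup) :=
  stmt4_general c hc Λ hfull hcovol M W₁ hW₁ hW₁e hW₁small
end

section
/- For every integer N ≥ 2 there exists ε > 0 such that for every lattice Λ ⊆ ℝ^N of full rank N and covolume 1, there exist real numbers a₁, …, a_N > 0 with a₁·a₂·⋯·a_N = 1 such that the diagonal matrix g = diag(a₁, …, a_N) satisfies ‖g v‖ ≥ ε for every nonzero v ∈ Λ, where ‖·‖ is the standard Euclidean norm on ℝ^N. -/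
/-!
Suppose that no positive diagonal translate of `Λ` has all its nonzero vectors of length at
least `ε`, and let `ρ ≤ ε` be the supremum over the orbit of the length of a shortest vector.
Some translate `Λ₀` has shortest vector longer than `ρ / 2`, and then every diagonal translate
of `Λ₀` has a vector shorter than `2ρ`. Given `j < N` independent vectors of `Λ₀`, stretch the
`j` coordinates of a maximal minor of theirs by a large factor: the short vector of the
stretched lattice comes from a vector of `Λ₀` of length `O(ρ)` outside their span, because by
Cramer's rule the coordinates of a maximal minor control every vector of the span. After `N`
steps, `N` independent vectors of length `O(ρ)` in the unimodular lattice `Λ₀` give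
`1 ≤ N! (Cρ)^N`, which fails for `ε` small.
-/

open Matrix

section Minors

variable {m n K : Type*} [Fintype m] [Field K]

lemma Matrix.span_col_eq_top_of_linearIndependent_row [Fintype n] {W : Matrix m n K}
    (hW : LinearIndependent K W.row) : Submodule.span K (Set.range W.col) = ⊤ := by
  apply Submodule.eq_top_of_finrank_eq
  rw [← rank_eq_finrank_span_cols, rank_eq_finrank_span_row, finrank_span_eq_card hW,
    Module.finrank_fintype_fun_eq_card]

variable [DecidableEq m]

lemma Matrix.exists_det_submatrix_ne_zero [Fintype n] {W : Matrix m n K}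
    (hW : LinearIndependent K W.row) : ∃ φ : m → n, (W.submatrix id φ).det ≠ 0 := by
  obtain ⟨κ, a, -, hspan, hind⟩ := exists_linearIndependent' K W.col
  rw [span_col_eq_top_of_linearIndependent_row hW] at hspan
  let e := (Module.Basis.mk hind hspan.ge).indexEquiv (Pi.basisFun K m)
  refine ⟨a ∘ e.symm, ?_⟩
  rw [← isUnit_iff_ne_zero, ← isUnit_iff_isUnit_det, ← linearIndependent_cols_iff_isUnit]
  exact hind.comp _ e.symm.injective

variable [LinearOrder K] [IsStrictOrderedRing K]

lemma Matrix.exists_abs_det_submatrix_max [Fintype n] {W : Matrix m n K}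
    (hW : LinearIndependent K W.row) :
    ∃ φ : m → n, (W.submatrix id φ).det ≠ 0 ∧
      ∀ ψ : m → n, |(W.submatrix id ψ).det| ≤ |(W.submatrix id φ).det| := by
  classical
  obtain ⟨φ₀, hφ₀⟩ := exists_det_submatrix_ne_zero hW
  have : Nonempty (m → n) := ⟨φ₀⟩
  obtain ⟨φ, hφ⟩ := Finite.exists_max fun ψ : m → n => |(W.submatrix id ψ).det|
  refine ⟨φ, fun h => hφ₀ ?_, hφ⟩
  simpa [h] using hφ φ₀

/-- By Cramer's rule, the coefficients expressing column `i` of `W` through the columns `φ` are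
ratios of minors, hence of absolute value at most one when the minor at `φ` is maximal. -/
lemma Matrix.abs_vecMul_apply_le_sum {W : Matrix m n K} {φ : m → n}
    (hφ : (W.submatrix id φ).det ≠ 0)
    (hmax : ∀ ψ : m → n, |(W.submatrix id ψ).det| ≤ |(W.submatrix id φ).det|)
    (γ : m → K) (i : n) : |(γ ᵥ* W) i| ≤ ∑ p, |(γ ᵥ* W) (φ p)| := by
  set A := W.submatrix id φ
  have hcramer : ∀ p, A.cramer (W.col i) p = (W.submatrix id (Function.update φ p i)).det := by
    intro p
    rw [cramer_apply]
    congr 1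
    ext q p'
    rcases eq_or_ne p' p with rfl | hne <;> simp [A, *]
  have hA : A.det * (γ ᵥ* W) i = ∑ p, (γ ᵥ* W) (φ p) * A.cramer (W.col i) p := by
    calc A.det * (γ ᵥ* W) i = γ ⬝ᵥ (A.det • W.col i) := by
          rw [dotProduct_smul, smul_eq_mul]; rfl
      _ = _ := by rw [← mulVec_cramer, dotProduct_mulVec]; rfl
  have hle : |A.det| * |(γ ᵥ* W) i| ≤ |A.det| * ∑ p, |(γ ᵥ* W) (φ p)| := by
    rw [← abs_mul, hA, Finset.mul_sum]
    refine (Finset.abs_sum_le_sum_abs _ _).trans (Finset.sum_le_sum fun p _ => ?_)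
    rw [abs_mul, mul_comm, hcramer]
    exact mul_le_mul_of_nonneg_right (hmax _) (abs_nonneg _)
  exact le_of_mul_le_mul_left hle (abs_pos.2 hφ)

end Minors

section Euclidean

variable {n : Type*} [Fintype n]

lemma EuclideanSpace.abs_apply_le_norm (x : EuclideanSpace ℝ n) (i : n) : |x i| ≤ ‖x‖ :=
  PiLp.norm_apply_le x i

lemma EuclideanSpace.norm_le_sum_abs_apply (x : EuclideanSpace ℝ n) : ‖x‖ ≤ ∑ i, |x i| := by
  rw [EuclideanSpace.norm_eq, ← Real.sqrt_sq (Finset.sum_nonneg fun i _ => abs_nonneg (x i))]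
  exact Real.sqrt_le_sqrt (by
    simpa using Finset.sum_sq_le_sq_sum_of_nonneg fun i _ => abs_nonneg (x i))

lemma EuclideanSpace.norm_le_mul_norm_of_abs_apply_le {x y : EuclideanSpace ℝ n} {M : ℝ}
    (hM : 0 ≤ M) (h : ∀ i, |x i| ≤ M * |y i|) : ‖x‖ ≤ M * ‖y‖ := by
  rw [EuclideanSpace.norm_eq, EuclideanSpace.norm_eq, ← Real.sqrt_sq hM,
    ← Real.sqrt_mul (sq_nonneg M), Finset.mul_sum]
  refine Real.sqrt_le_sqrt (Finset.sum_le_sum fun i _ => ?_)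
  simpa [mul_pow] using pow_le_pow_left₀ (abs_nonneg _) (h i) 2

variable [DecidableEq n]

@[simp]
lemma toEuclideanLin_diagonal_apply (a : n → ℝ) (v : EuclideanSpace ℝ n) (i : n) :
    toEuclideanLin (diagonal a) v i = a i * v i := by
  simp [mulVec_diagonal]

lemma toEuclideanLin_diagonal_mul (a b : n → ℝ) (v : EuclideanSpace ℝ n) :
    toEuclideanLin (diagonal (a * b)) v =
      toEuclideanLin (diagonal a) (toEuclideanLin (diagonal b) v) := by
  ext i
  simp [mul_assoc]

end Euclidean

section RowMatrix

variable {ι n : Type*}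

def rowMatrix (w : ι → EuclideanSpace ℝ n) : Matrix ι n ℝ :=
  Matrix.of fun p i => w p i

lemma linearIndependent_row_rowMatrix {w : ι → EuclideanSpace ℝ n}
    (hw : LinearIndependent ℝ w) : LinearIndependent ℝ (rowMatrix w).row :=
  hw.map' (WithLp.linearEquiv 2 ℝ (n → ℝ)).toLinearMap (LinearEquiv.ker _)

lemma sum_smul_apply_eq_vecMul_rowMatrix [Fintype ι] (γ : ι → ℝ) (w : ι → EuclideanSpace ℝ n)
    (i : n) : (∑ q, γ q • w q) i = (γ ᵥ* rowMatrix w) i := by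
  simp [rowMatrix, vecMul, dotProduct]

lemma norm_le_of_mem_span_of_abs_apply_le [Fintype ι] [DecidableEq ι] [Fintype n]
    {w : ι → EuclideanSpace ℝ n} {φ : ι → n} (hφ : ((rowMatrix w).submatrix id φ).det ≠ 0)
    (hmax : ∀ ψ : ι → n,
      |((rowMatrix w).submatrix id ψ).det| ≤ |((rowMatrix w).submatrix id φ).det|)
    {x : EuclideanSpace ℝ n} (hx : x ∈ Submodule.span ℝ (Set.range w)) {c : ℝ}
    (hc : ∀ p, |x (φ p)| ≤ c) : ‖x‖ ≤ Fintype.card n * (Fintype.card ι * c) := by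
  have hcoord : ∀ i, |x i| ≤ ∑ p, |x (φ p)| := by
    obtain ⟨γ, rfl⟩ := (Submodule.mem_span_range_iff_exists_fun ℝ).1 hx
    simpa only [sum_smul_apply_eq_vecMul_rowMatrix] using abs_vecMul_apply_le_sum hφ hmax γ
  calc ‖x‖ ≤ ∑ i, |x i| := EuclideanSpace.norm_le_sum_abs_apply x
    _ ≤ ∑ _i : n, ∑ _p : ι, c :=
      Finset.sum_le_sum fun i _ => (hcoord i).trans (Finset.sum_le_sum fun p _ => hc p)
    _ = Fintype.card n * (Fintype.card ι * c) := by simp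

variable [Fintype n] [DecidableEq n]

lemma det_rowMatrix_ne_zero {w : n → EuclideanSpace ℝ n} (hw : LinearIndependent ℝ w) :
    (rowMatrix w).det ≠ 0 :=
  ((isUnit_iff_isUnit_det _).1
    (linearIndependent_rows_iff_isUnit.1 (linearIndependent_row_rowMatrix hw))).ne_zero

lemma rowMatrix_toEuclideanLin_diagonal (a : n → ℝ) (b : n → EuclideanSpace ℝ n) :
    rowMatrix (fun p => toEuclideanLin (diagonal a) (b p)) = rowMatrix b * diagonal a := by
  ext p i
  simp [rowMatrix, mul_comm]

lemma abs_det_rowMatrix_le_of_norm_le {w : n → EuclideanSpace ℝ n} {M : ℝ}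
    (hw : ∀ p, ‖w p‖ ≤ M) :
    |(rowMatrix w).det| ≤ (Fintype.card n).factorial * M ^ Fintype.card n := by
  simpa using det_le (A := rowMatrix w) (abv := AbsoluteValue.abs) fun p i =>
    (EuclideanSpace.abs_apply_le_norm (w p) i).trans (hw p)

lemma abs_det_rowMatrix_le_of_mem_span_int {b w : n → EuclideanSpace ℝ n}
    (hw : ∀ p, w p ∈ Submodule.span ℤ (Set.range b)) (hwi : LinearIndependent ℝ w) :
    |(rowMatrix b).det| ≤ |(rowMatrix w).det| := by
  choose M hM using fun p => (Submodule.mem_span_range_iff_exists_fun ℤ).1 (hw p)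
  have hfactor : rowMatrix w = (Matrix.of M).map (Int.cast : ℤ → ℝ) * rowMatrix b := by
    ext p i
    simp [← hM, rowMatrix, mul_apply, zsmul_eq_mul]
  have hdet : (rowMatrix w).det = ((Matrix.of M).det : ℝ) * (rowMatrix b).det := by
    rw [hfactor, det_mul, Int.cast_det]
  have hM0 : (Matrix.of M).det ≠ 0 := fun h => det_rowMatrix_ne_zero hwi (by simp [hdet, h])
  rw [hdet, abs_mul]
  exact le_mul_of_one_le_left (abs_nonneg _) (by exact_mod_cast Int.one_le_abs hM0)

lemma abs_det_mul_prod_le_of_mem_image_span_int {a : n → ℝ} {b w : n → EuclideanSpace ℝ n}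
    (hw : ∀ p, w p ∈ toEuclideanLin (diagonal a) '' Submodule.span ℤ (Set.range b))
    (hwi : LinearIndependent ℝ w) : |(rowMatrix b).det * ∏ i, a i| ≤ |(rowMatrix w).det| := by
  have hspan : ∀ p, w p ∈ Submodule.span ℤ
      (Set.range fun p => toEuclideanLin (diagonal a) (b p)) := by
    intro p
    obtain ⟨v, hv, hvp⟩ := hw p
    rw [← hvp, Set.range_comp']
    exact Submodule.apply_mem_span_image_of_mem_span
      ((toEuclideanLin (diagonal a)).restrictScalars ℤ) hv
  simpa [rowMatrix_toEuclideanLin_diagonal] using abs_det_rowMatrix_le_of_mem_span_int hspan hwi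

lemma sqrt_det_gram_eq_abs_det_rowMatrix (v : n → EuclideanSpace ℝ n) :
    √(Matrix.of fun p q => (inner ℝ (v p) (v q) : ℝ)).det = |(rowMatrix v).det| := by
  have hgram : (Matrix.of fun p q => (inner ℝ (v p) (v q) : ℝ)) = rowMatrix v * (rowMatrix v)ᵀ := by
    ext p q
    simp [rowMatrix, mul_apply, PiLp.inner_apply, mul_comm]
  rw [hgram, det_mul, det_transpose, ← sq, Real.sqrt_sq_eq_abs]

end RowMatrix

lemma covol_span_eq_abs_det_rowMatrix {N : ℕ} {b : Fin N → EuclideanSpace ℝ (Fin N)}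
    (hb : LinearIndependent ℝ b) :
    covol (Submodule.span ℤ (Set.range b)).toAddSubgroup = |(rowMatrix b).det| := by
  rw [covol, ← csInf_singleton |(rowMatrix b).det|]
  congr 1
  ext x
  constructor
  · rintro ⟨r, v, hv, hspan, rfl⟩
    rw [Submodule.toAddSubgroup_inj] at hspan
    have hbv : ∀ p, b p ∈ Submodule.span ℤ (Set.range v) :=
      fun p => hspan ▸ Submodule.subset_span (Set.mem_range_self p)
    have hvb : ∀ p, v p ∈ Submodule.span ℤ (Set.range b) :=
      fun p => hspan ▸ Submodule.subset_span (Set.mem_range_self p)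
    obtain rfl : r = N := by
      refine le_antisymm (by simpa using hv.fintype_card_le_finrank) ?_
      calc N = Module.finrank ℝ (Submodule.span ℝ (Set.range b)) := by
            rw [finrank_span_eq_card hb, Fintype.card_fin]
        _ ≤ Module.finrank ℝ (Submodule.span ℝ (Set.range v)) := by
            refine Submodule.finrank_mono (Submodule.span_le.2 ?_)
            rintro _ ⟨p, rfl⟩
            exact Submodule.span_le_restrictScalars ℤ ℝ _ (hbv p)
        _ ≤ r := by simpa [Set.finrank] using finrank_range_le_card (R := ℝ) v
    rw [Set.mem_singleton_iff, sqrt_det_gram_eq_abs_det_rowMatrix]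
    exact le_antisymm (abs_det_rowMatrix_le_of_mem_span_int hbv hb)
      (abs_det_rowMatrix_le_of_mem_span_int hvb hv)
  · rintro rfl
    exact ⟨N, b, hb, rfl, (sqrt_det_gram_eq_abs_det_rowMatrix b).symm⟩

lemma AddSubgroup.exists_pos_forall_le_norm {E : Type*} [NormedAddCommGroup E] (L : AddSubgroup E)
    [DiscreteTopology L] : ∃ δ > 0, ∀ x ∈ L, x ≠ 0 → δ ≤ ‖x‖ := by
  obtain ⟨δ, hδ, hball⟩ := Metric.isOpen_iff.1 (isOpen_discrete {(0 : L)}) 0 rfl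
  refine ⟨δ, hδ, fun x hx hx0 => not_lt.1 fun hlt => hx0 ?_⟩
  simpa using hball (show (⟨x, hx⟩ : L) ∈ Metric.ball 0 δ by simpa using hlt)

lemma exists_pos_forall_le_norm_of_mem_span_int {n : Type*} [Fintype n] [DecidableEq n]
    {b : n → EuclideanSpace ℝ n} (hb : LinearIndependent ℝ b) :
    ∃ δ > 0, ∀ v ∈ Submodule.span ℤ (Set.range b), v ≠ 0 → δ ≤ ‖v‖ := by
  have hspan := (hb.span_eq_top_of_card_eq_finrank' (by simp)).ge
  have : DiscreteTopology (Submodule.span ℤ (Set.range b)).toAddSubgroup := by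
    rw [← Module.Basis.coe_mk hb hspan]
    infer_instance
  exact AddSubgroup.exists_pos_forall_le_norm (Submodule.span ℤ (Set.range b)).toAddSubgroup

section Scaling

variable {n : Type*} [Fintype n] [DecidableEq n]

/-- `ρ` is the supremum, over the diagonal orbit of `Λ`, of the length of a shortest nonzero
vector. -/
lemma exists_near_optimal_scaling {Λ : Set (EuclideanSpace ℝ n)} {δ ε : ℝ} (hδ : 0 < δ)
    (hΛ : ∀ v ∈ Λ, v ≠ 0 → δ ≤ ‖v‖)
    (hfar : ∀ a : n → ℝ, (∀ i, 0 < a i) → ∏ i, a i = 1 →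
      ∃ v ∈ Λ, v ≠ 0 ∧ ‖toEuclideanLin (diagonal a) v‖ < ε) :
    ∃ a₀ : n → ℝ, (∀ i, 0 < a₀ i) ∧ ∏ i, a₀ i = 1 ∧ ∃ ρ, 0 < ρ ∧ ρ ≤ ε ∧
      ∀ a : n → ℝ, (∀ i, 0 < a i) → ∏ i, a i = 1 → ∃ v ∈ Λ,
        ρ / 2 < ‖toEuclideanLin (diagonal a₀) v‖ ∧
        ‖toEuclideanLin (diagonal a) (toEuclideanLin (diagonal a₀) v)‖ < 2 * ρ := by
  set good : Set ℝ := {c | ∃ a : n → ℝ, (∀ i, 0 < a i) ∧ ∏ i, a i = 1 ∧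
    ∀ v ∈ Λ, v ≠ 0 → c ≤ ‖toEuclideanLin (diagonal a) v‖}
  have hδgood : δ ∈ good := ⟨1, fun _ => one_pos, by simp, fun v hv hv0 => by
    simpa using hΛ v hv hv0⟩
  have hgood_lt : ∀ c ∈ good, c < ε := by
    rintro c ⟨a, ha, ha1, hc⟩
    obtain ⟨v, hv, hv0, hvε⟩ := hfar a ha ha1
    exact (hc v hv hv0).trans_lt hvε
  have hbdd : BddAbove good := ⟨ε, fun c hc => (hgood_lt c hc).le⟩
  set ρ := sSup good
  have hρ : 0 < ρ := hδ.trans_le (le_csSup hbdd hδgood)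
  obtain ⟨c, ⟨a₀, ha₀, ha₀1, hc⟩, hρc⟩ := exists_lt_of_lt_csSup ⟨δ, hδgood⟩ (half_lt_self hρ)
  refine ⟨a₀, ha₀, ha₀1, ρ, hρ, csSup_le ⟨δ, hδgood⟩ fun c hc => (hgood_lt c hc).le,
    fun a ha ha1 => ?_⟩
  by_contra! hlong
  have h2ρ : 2 * ρ ∈ good := by
    refine ⟨a * a₀, fun i => mul_pos (ha i) (ha₀ i), by
      simp only [Pi.mul_apply, Finset.prod_mul_distrib, ha1, ha₀1, one_mul], fun v hv hv0 => ?_⟩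
    rw [toEuclideanLin_diagonal_mul]
    exact hlong v hv (hρc.trans_le (hc v hv hv0))
  linarith [le_csSup hbdd h2ρ]

lemma exists_sum_eq_zero_of_notMem_range {m : Type*} [Fintype m] {φ : m → n}
    (hφ : Function.Injective φ) {i₀ : n} (hi₀ : i₀ ∉ Set.range φ) {τ : ℝ} (hτ : 0 ≤ τ) :
    ∃ t : n → ℝ, ∑ i, t i = 0 ∧ (∀ p, t (φ p) = τ) ∧ ∀ i, -(Fintype.card m * τ) ≤ t i := by
  classical
  refine ⟨∑ p, Pi.single (φ p) τ - Pi.single i₀ (Fintype.card m * τ), ?_, fun p => ?_, fun i => ?_⟩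
  · simp [Finset.sum_apply, Finset.sum_comm (γ := n)]
  · have hp : φ p ≠ i₀ := fun h => hi₀ ⟨p, h⟩
    simp [Finset.sum_apply, Pi.single_apply, hφ.eq_iff, hp]
  · have h1 : 0 ≤ (∑ p, Pi.single (φ p) τ : n → ℝ) i := by
      simp only [Finset.sum_apply]
      exact Finset.sum_nonneg fun p _ => by by_cases h : i = φ p <;> simp [h, hτ]
    have h2 : (Pi.single i₀ (Fintype.card m * τ) : n → ℝ) i ≤ Fintype.card m * τ := by
      by_cases h : i = i₀
      · simp [h]
      · simpa [h] using mul_nonneg (Nat.cast_nonneg (Fintype.card m)) hτ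
    simp only [Pi.sub_apply]
    linarith

end Scaling

section ShortVectors

variable {n : Type*} [Fintype n] [DecidableEq n] {L : Set (EuclideanSpace ℝ n)} {ρ : ℝ}

/-- Stretch the coordinates of a maximal minor of `w` by `q = 4 (card n)²`, shrinking one other
coordinate to keep the determinant `1`. The vector of `L` made short by this cannot lie in the
span of `w`: its coordinates on the minor are small, and they control all the others. -/
lemma exists_short_notMem_span
    (hshort : ∀ a : n → ℝ, (∀ i, 0 < a i) → ∏ i, a i = 1 →
      ∃ u ∈ L, ρ / 2 < ‖u‖ ∧ ‖toEuclideanLin (diagonal a) u‖ < 2 * ρ)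
    {j : ℕ} (hj : j < Fintype.card n) {w : Fin j → EuclideanSpace ℝ n}
    (hw : LinearIndependent ℝ w) :
    ∃ u ∈ L, u ∉ Submodule.span ℝ (Set.range w) ∧
      ‖u‖ ≤ 2 * (4 * Fintype.card n ^ 2) ^ Fintype.card n * ρ := by
  set N := Fintype.card n
  set q : ℝ := 4 * N ^ 2
  have hN : (1 : ℝ) ≤ N := by exact_mod_cast j.zero_le.trans_lt hj
  have hjN : (j : ℝ) ≤ N := by exact_mod_cast hj.le
  have hq : 1 ≤ q := by nlinarith
  obtain ⟨φ, hφ, hmax⟩ := exists_abs_det_submatrix_max (linearIndependent_row_rowMatrix hw)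
  have hφinj : Function.Injective φ := fun p p' h => by_contra fun hne =>
    hφ (det_zero_of_column_eq hne fun _ => by simp [h])
  obtain ⟨i₀, hi₀⟩ : ∃ i₀, i₀ ∉ Set.range φ := by
    by_contra! hsurj
    exact hj.not_ge (by simpa using Fintype.card_le_of_surjective φ hsurj)
  obtain ⟨t, ht0, htφ, htlow⟩ :=
    exists_sum_eq_zero_of_notMem_range hφinj hi₀ (Real.log_nonneg hq)
  obtain ⟨u, huL, hu, hushort⟩ := hshort (fun i => Real.exp (t i)) (fun i => Real.exp_pos _)
    (by rw [← Real.exp_sum, ht0, Real.exp_zero])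
  set y := toEuclideanLin (diagonal fun i => Real.exp (t i)) u
  have hρ : 0 < ρ := by linarith [norm_nonneg y, norm_nonneg u]
  refine ⟨u, huL, fun hspan => hu.not_ge ?_, ?_⟩
  · have hq0 : 0 < q := by positivity
    have hcoord : ∀ p, |u (φ p)| ≤ 2 * ρ / q := fun p => by
      have hyφ : |y (φ p)| = q * |u (φ p)| := by
        simp [y, htφ, Real.exp_log hq0, abs_mul, abs_of_pos hq0]
      rw [le_div_iff₀ hq0, mul_comm, ← hyφ]
      exact (EuclideanSpace.abs_apply_le_norm y _).trans hushort.le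
    calc ‖u‖ ≤ N * (j * (2 * ρ / q)) := by
          simpa using norm_le_of_mem_span_of_abs_apply_le hφ hmax hspan hcoord
      _ ≤ ρ / 2 := by
        rw [← mul_assoc, mul_div_assoc', div_le_div_iff₀ hq0 two_pos]
        nlinarith [mul_le_mul_of_nonneg_left hjN (by positivity : (0 : ℝ) ≤ N * ρ)]
  · have hscale : ∀ i, 1 ≤ q ^ N * Real.exp (t i) := fun i => by
      rw [← Real.exp_log (by positivity : 0 < q), ← Real.exp_nat_mul, ← Real.exp_add]
      have := htlow i
      simp only [Fintype.card_fin] at this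
      exact Real.one_le_exp (by nlinarith [Real.log_nonneg hq])
    calc ‖u‖ ≤ q ^ N * ‖y‖ :=
          EuclideanSpace.norm_le_mul_norm_of_abs_apply_le (by positivity) fun i => by
          simp only [y, toEuclideanLin_diagonal_apply, abs_mul, abs_of_pos (Real.exp_pos _)]
          nlinarith [hscale i, abs_nonneg (u i)]
      _ ≤ 2 * q ^ N * ρ := by nlinarith [pow_pos (by positivity : 0 < q) N]

lemma exists_linearIndependent_short_vectors
    (hshort : ∀ a : n → ℝ, (∀ i, 0 < a i) → ∏ i, a i = 1 →
      ∃ u ∈ L, ρ / 2 < ‖u‖ ∧ ‖toEuclideanLin (diagonal a) u‖ < 2 * ρ) :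
    ∀ j ≤ Fintype.card n, ∃ w : Fin j → EuclideanSpace ℝ n, (∀ p, w p ∈ L) ∧
      LinearIndependent ℝ w ∧ ∀ p, ‖w p‖ ≤ 2 * (4 * Fintype.card n ^ 2) ^ Fintype.card n * ρ
  | 0, _ => ⟨Fin.elim0, fun p => p.elim0, linearIndependent_empty_type, fun p => p.elim0⟩
  | j + 1, hj => by
    obtain ⟨w, hwL, hw, hwnorm⟩ := exists_linearIndependent_short_vectors hshort j (by omega)
    obtain ⟨u, huL, hu, hunorm⟩ := exists_short_notMem_span hshort hj hw
    refine ⟨Fin.snoc w u, ?_, linearIndependent_finSnoc.2 ⟨hw, hu⟩, ?_⟩ <;>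
      simp [Fin.forall_fin_succ', *]

end ShortVectors

lemma mul_pow_lt_one_of_le_inv_add_one {C ρ : ℝ} {N : ℕ} (hN : N ≠ 0) (hC : 0 ≤ C) (hρ : 0 < ρ)
    (hρC : ρ ≤ (C + 1)⁻¹) : C * ρ ^ N < 1 := by
  have hρ1 : ρ * (C + 1) ≤ 1 :=
    (mul_le_mul_of_nonneg_right hρC (by positivity)).trans_eq (inv_mul_cancel₀ (by positivity))
  have hρN : ρ ^ N ≤ ρ := pow_le_of_le_one hρ.le (by nlinarith) hN
  nlinarith [mul_le_mul_of_nonneg_left hρN hC]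

/-- Theorem 1.1 for `G = SL_N`, `Γ = SL_N(ℤ)`, `H` the positive diagonal group: every
unimodular lattice in `ℝ^N` can be moved by a positive diagonal matrix of determinant one so
that its shortest nonzero vector has length at least a universal `ε > 0`. -/
theorem stmt6 (N : ℕ) (hN : 2 ≤ N) :
    ∃ ε : ℝ, 0 < ε ∧
      ∀ Λ : AddSubgroup (EuclideanSpace ℝ (Fin N)),
        (∃ b : Fin N → EuclideanSpace ℝ (Fin N),
          LinearIndependent ℝ b ∧ (Submodule.span ℤ (Set.range b)).toAddSubgroup = Λ) →
        covol Λ = 1 →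
        ∃ a : Fin N → ℝ, (∀ i, 0 < a i) ∧ (∏ i, a i) = 1 ∧
          ∀ v ∈ Λ, v ≠ 0 →
            ε ≤ ‖(Matrix.toEuclideanLin (Matrix.diagonal a) v : EuclideanSpace ℝ (Fin N))‖ := by
  set B : ℝ := 2 * (4 * N ^ 2) ^ N
  refine ⟨(N.factorial * B ^ N + 1)⁻¹, by positivity, ?_⟩
  rintro Λ ⟨b, hb, rfl⟩ hcovol
  rw [covol_span_eq_abs_det_rowMatrix hb] at hcovol
  obtain ⟨δ, hδ, hδΛ⟩ := exists_pos_forall_le_norm_of_mem_span_int hb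
  by_contra! hfar
  obtain ⟨a₀, -, ha₀, ρ, hρ, hρε, hshort⟩ := exists_near_optimal_scaling hδ hδΛ hfar
  obtain ⟨w, hwL, hw, hwnorm⟩ := exists_linearIndependent_short_vectors
    (L := toEuclideanLin (diagonal a₀) '' Submodule.span ℤ (Set.range b))
    (fun a ha ha1 => by
      obtain ⟨v, hv, hlong, hsmall⟩ := hshort a ha ha1
      exact ⟨_, ⟨v, hv, rfl⟩, hlong, hsmall⟩) N (by simp)
  have hlower : 1 ≤ |(rowMatrix w).det| := by
    simpa [abs_mul, hcovol, ha₀] using abs_det_mul_prod_le_of_mem_image_span_int hwL hw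
  simp only [Fintype.card_fin] at hwnorm
  have hupper := abs_det_rowMatrix_le_of_norm_le hwnorm
  rw [Fintype.card_fin, mul_pow] at hupper
  linarith [mul_pow_lt_one_of_le_inv_add_one (by omega : N ≠ 0) (by positivity) hρ hρε]
end
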